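/- arXiv:1905.05323 — 6 statements merged into one kernel-verified Lean document; each statement's English description precedes it below -/
import Mathlib

section
/- Let n ≥ 1, and let X₀ be a real M×v matrix such that X₀ᵀX₀ is invertible. Set X = Iₙ ⊗ X₀, H = (1,1,...,1)₁ₓₙ ⊗ I_v, Z = (XᵀX)⁻¹, and let D ∈ ℝᵛ. Let Θ ∈ ℝ^{nv} satisfy HΘ = D. Let (Ω,P) be a probability space and e : Ω → ℝ^{nM} a random vector whose entries have integrable products, such that (M/(4N))·I − E[eeᵀ] is positive semidefinite for some constants M, N > 0. Define Ŷ = XΘ + e and the constrained least-squares estimator Θ̂_CLS = Θ̂_LS − ZHᵀ(HZHᵀ)⁻¹(HΘ̂_LS − D), where Θ̂_LS = ZXᵀŶ. Then E[‖Θ̂_CLS − Θ‖²] ≤ ((n−1)M/(4N))·Tr[(X₀ᵀX₀)⁻¹]. -/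
/-!
Writing `Z = (XᵀX)⁻¹` and `P = Z Hᵀ (H Z Hᵀ)⁻¹ H`, the constrained estimator errs by
`Θ̂_CLS - Θ = A e` with `A = (1 - P) Z Xᵀ`, because `HΘ = D` cancels the deterministic part.
Hence `E‖Θ̂_CLS - Θ‖² = Tr(AᵀA E[eeᵀ]) ≤ M/(4N) Tr(AAᵀ)`, and `P` is a `Z`-self-adjoint
idempotent, so `AAᵀ = Z - PZ`. For the block-diagonal design `Z = I ⊗ G⁻¹` and `H Z Hᵀ = n G⁻¹`
with `G = X₀ᵀX₀`, which gives `Tr Z = n Tr G⁻¹` and `Tr(PZ) = Tr G⁻¹`.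
-/

open MeasureTheory Matrix
open scoped Kronecker

section SecondMoment

variable {Ω p q : Type*} [MeasurableSpace Ω] [Fintype p] [Fintype q]

noncomputable def secondMoment (μ : Measure Ω) (e : Ω → q → ℝ) : Matrix q q ℝ :=
  Matrix.of fun i j => ∫ ω, e ω i * e ω j ∂μ

lemma sum_sq_mulVec (A : Matrix p q ℝ) (x : q → ℝ) :
    ∑ i, (A *ᵥ x) i ^ 2 = ∑ j, ∑ k, (Aᵀ * A) j k * (x k * x j) := by
  simp only [mulVec, dotProduct, sq, mul_apply, transpose_apply, Finset.sum_mul, Finset.mul_sum]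
  rw [Finset.sum_comm]
  refine Finset.sum_congr rfl fun j _ => ?_
  rw [Finset.sum_comm]
  exact Finset.sum_congr rfl fun k _ => Finset.sum_congr rfl fun i _ => by ring

lemma integral_sum_sq_mulVec {μ : Measure Ω} {e : Ω → q → ℝ}
    (he : ∀ i j, Integrable (fun ω => e ω i * e ω j) μ) (A : Matrix p q ℝ) :
    ∫ ω, ∑ i, (A *ᵥ e ω) i ^ 2 ∂μ = (Aᵀ * A * secondMoment μ e).trace := by
  simp_rw [sum_sq_mulVec]
  have hterm : ∀ j k, Integrable (fun ω => (Aᵀ * A) j k * (e ω k * e ω j)) μ :=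
    fun j k => (he k j).const_mul _
  rw [integral_finsetSum _ fun j _ => integrable_finsetSum _ fun k _ => hterm j k, trace]
  refine Finset.sum_congr rfl fun j _ => ?_
  rw [integral_finsetSum _ fun k _ => hterm j k]
  simp only [integral_const_mul, diag_apply, mul_apply, secondMoment, of_apply]

lemma trace_transpose_mul_self_mul_le [DecidableEq q] {c : ℝ} {S : Matrix q q ℝ}
    (hS : (c • (1 : Matrix q q ℝ) - S).PosSemidef) (A : Matrix p q ℝ) :
    (Aᵀ * A * S).trace ≤ c * (A * Aᵀ).trace := by
  have h := (hS.mul_mul_conjTranspose_same A).trace_nonneg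
  rw [conjTranspose_eq_transpose_of_trivial, Matrix.mul_sub, Matrix.sub_mul, trace_sub,
    Matrix.mul_smul, Matrix.smul_mul, Matrix.mul_one, trace_smul, smul_eq_mul] at h
  rw [Matrix.mul_assoc, trace_mul_comm]
  linarith

lemma integral_sum_sq_mulVec_le [DecidableEq q] {μ : Measure Ω} {e : Ω → q → ℝ}
    (he : ∀ i j, Integrable (fun ω => e ω i * e ω j) μ) {c : ℝ}
    (hcov : (c • (1 : Matrix q q ℝ) - secondMoment μ e).PosSemidef) (A : Matrix p q ℝ) :
    ∫ ω, ∑ i, (A *ᵥ e ω) i ^ 2 ∂μ ≤ c * (A * Aᵀ).trace :=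
  (integral_sum_sq_mulVec he A).trans_le (trace_transpose_mul_self_mul_le hcov A)

end SecondMoment

section ConstrainedLeastSquares

variable {m k r : Type*} [Fintype m] [Fintype k] [Fintype r] [DecidableEq k] [DecidableEq r]
  (X : Matrix m k ℝ) (H : Matrix r k ℝ)

noncomputable def clsProjection : Matrix k k ℝ :=
  (Xᵀ * X)⁻¹ * Hᵀ * (H * (Xᵀ * X)⁻¹ * Hᵀ)⁻¹ * H

noncomputable def clsErrorMatrix : Matrix k m ℝ :=
  (1 - clsProjection X H) * ((Xᵀ * X)⁻¹ * Xᵀ)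

lemma isSymm_inv_transpose_mul_self : IsSymm (Xᵀ * X)⁻¹ :=
  IsSymm.inv <| by rw [IsSymm, transpose_mul, transpose_transpose]

lemma cls_sub_eq_clsErrorMatrix_mulVec {Θ : k → ℝ} {D : r → ℝ} (hΘ : H *ᵥ Θ = D) (e : m → ℝ) :
    Θ + ((Xᵀ * X)⁻¹ * Xᵀ) *ᵥ e
      - ((Xᵀ * X)⁻¹ * Hᵀ * (H * (Xᵀ * X)⁻¹ * Hᵀ)⁻¹) *ᵥ (H *ᵥ (Θ + ((Xᵀ * X)⁻¹ * Xᵀ) *ᵥ e) - D)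
      - Θ = clsErrorMatrix X H *ᵥ e := by
  rw [mulVec_add, hΘ, add_sub_cancel_left, mulVec_mulVec, mulVec_mulVec, clsErrorMatrix,
    Matrix.sub_mul, Matrix.one_mul, sub_mulVec, clsProjection]
  simp only [Matrix.mul_assoc]
  abel

variable {X H}

lemma leastSquares_eq_add_mulVec (hX : IsUnit (Xᵀ * X).det) (Θ : k → ℝ) (e : m → ℝ) :
    (Xᵀ * X)⁻¹ *ᵥ (Xᵀ *ᵥ (X *ᵥ Θ + e)) = Θ + ((Xᵀ * X)⁻¹ * Xᵀ) *ᵥ e := by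
  rw [mulVec_add, mulVec_add, mulVec_mulVec, mulVec_mulVec, Matrix.mul_assoc,
    nonsing_inv_mul _ hX, one_mulVec, mulVec_mulVec]

lemma isIdempotentElem_clsProjection (hQ : IsUnit (H * (Xᵀ * X)⁻¹ * Hᵀ).det) :
    IsIdempotentElem (clsProjection X H) := by
  set Q := H * (Xᵀ * X)⁻¹ * Hᵀ
  calc clsProjection X H * clsProjection X H
      = (Xᵀ * X)⁻¹ * Hᵀ * (Q⁻¹ * Q) * Q⁻¹ * H := by
        simp only [clsProjection, Q, Matrix.mul_assoc]
    _ = clsProjection X H := by rw [nonsing_inv_mul _ hQ, Matrix.mul_one, clsProjection]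

lemma inv_mul_transpose_clsProjection :
    (Xᵀ * X)⁻¹ * (clsProjection X H)ᵀ = clsProjection X H * (Xᵀ * X)⁻¹ := by
  have hZ := (isSymm_inv_transpose_mul_self X).eq
  have hQ : IsSymm (H * (Xᵀ * X)⁻¹ * Hᵀ)⁻¹ := by
    refine IsSymm.inv ?_
    rw [IsSymm, transpose_mul, transpose_mul, transpose_transpose, hZ, Matrix.mul_assoc]
  simp only [clsProjection, transpose_mul, transpose_transpose, hQ.eq, hZ]
  simp only [Matrix.mul_assoc]

lemma clsErrorMatrix_mul_transpose (hX : IsUnit (Xᵀ * X).det)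
    (hQ : IsUnit (H * (Xᵀ * X)⁻¹ * Hᵀ).det) :
    clsErrorMatrix X H * (clsErrorMatrix X H)ᵀ
      = (Xᵀ * X)⁻¹ - clsProjection X H * (Xᵀ * X)⁻¹ := by
  rw [clsErrorMatrix]
  set Z := (Xᵀ * X)⁻¹
  set P := clsProjection X H
  have hZ : Z * Xᵀ * (Z * Xᵀ)ᵀ = Z := by
    rw [transpose_mul, transpose_transpose, (isSymm_inv_transpose_mul_self X).eq,
      Matrix.mul_assoc, ← Matrix.mul_assoc Xᵀ, mul_nonsing_inv _ hX, Matrix.mul_one]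
  calc (1 - P) * (Z * Xᵀ) * ((1 - P) * (Z * Xᵀ))ᵀ
      = (1 - P) * (Z * Xᵀ * (Z * Xᵀ)ᵀ) * (1 - Pᵀ) := by
        rw [transpose_mul, transpose_sub, transpose_one]
        simp only [Matrix.mul_assoc]
    _ = Z - P * Z - Z * Pᵀ + P * (Z * Pᵀ) := by rw [hZ]; noncomm_ring
    _ = Z - P * Z := by
        rw [inv_mul_transpose_clsProjection, ← Matrix.mul_assoc,
          (isIdempotentElem_clsProjection hQ).eq]
        abel

lemma trace_clsProjection_mul :
    (clsProjection X H * (Xᵀ * X)⁻¹).trace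
      = (H * ((Xᵀ * X)⁻¹ * (Xᵀ * X)⁻¹) * Hᵀ * (H * (Xᵀ * X)⁻¹ * Hᵀ)⁻¹).trace := by
  rw [clsProjection, Matrix.mul_assoc, trace_mul_comm]
  simp only [Matrix.mul_assoc]

end ConstrainedLeastSquares

section BlockDiagonalDesign

variable {ι m v : Type*} [Fintype ι] [DecidableEq ι] [Fintype m]

lemma one_kronecker_transpose_mul_self (X₀ : Matrix m v ℝ) :
    ((1 : Matrix ι ι ℝ) ⊗ₖ X₀)ᵀ * ((1 : Matrix ι ι ℝ) ⊗ₖ X₀) = 1 ⊗ₖ (X₀ᵀ * X₀) := by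
  rw [← kroneckerMap_transpose, ← mul_kronecker_mul, transpose_one, Matrix.one_mul]

variable [Fintype v] [DecidableEq v]

lemma isUnit_det_one_kronecker_transpose_mul_self {X₀ : Matrix m v ℝ}
    (hX₀ : IsUnit (X₀ᵀ * X₀).det) :
    IsUnit (((1 : Matrix ι ι ℝ) ⊗ₖ X₀)ᵀ * ((1 : Matrix ι ι ℝ) ⊗ₖ X₀)).det := by
  rw [one_kronecker_transpose_mul_self, det_kronecker, det_one, one_pow, one_mul]
  exact hX₀.pow _

lemma mul_one_kronecker_mul_transpose {H : Matrix v (ι × v) ℝ}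
    (hH : ∀ a i, H a i = if i.2 = a then 1 else 0) (C : Matrix v v ℝ) :
    H * ((1 : Matrix ι ι ℝ) ⊗ₖ C) * Hᵀ = (Fintype.card ι : ℝ) • C := by
  ext a b
  simp [mul_apply, hH, Fintype.sum_prod_type, one_apply, mul_ite, Matrix.smul_apply, mul_comm]

lemma trace_clsErrorMatrix_mul_transpose_of_eq_one_kronecker [Nonempty ι] {X₀ : Matrix m v ℝ}
    (hX₀ : IsUnit (X₀ᵀ * X₀).det) {X : Matrix (ι × m) (ι × v) ℝ} (hX : X = 1 ⊗ₖ X₀)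
    {H : Matrix v (ι × v) ℝ} (hH : ∀ a i, H a i = if i.2 = a then 1 else 0) :
    (clsErrorMatrix X H * (clsErrorMatrix X H)ᵀ).trace
      = ((Fintype.card ι : ℝ) - 1) * ((X₀ᵀ * X₀)⁻¹).trace := by
  set G := X₀ᵀ * X₀
  have hGram : Xᵀ * X = 1 ⊗ₖ G := hX ▸ one_kronecker_transpose_mul_self X₀
  have hZ : (Xᵀ * X)⁻¹ = 1 ⊗ₖ G⁻¹ := by rw [hGram, inv_kronecker, inv_one]
  have hGram_unit : IsUnit (Xᵀ * X).det := hX ▸ isUnit_det_one_kronecker_transpose_mul_self hX₀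
  have hHZH_unit : IsUnit (H * (Xᵀ * X)⁻¹ * Hᵀ).det := by
    rw [hZ, mul_one_kronecker_mul_transpose hH, det_smul]
    exact ((Nat.cast_ne_zero.mpr Fintype.card_ne_zero).isUnit.pow _).mul
      (isUnit_nonsing_inv_det _ hX₀)
  have hHZZH : H * ((Xᵀ * X)⁻¹ * (Xᵀ * X)⁻¹) * Hᵀ = G⁻¹ * (H * (Xᵀ * X)⁻¹ * Hᵀ) := by
    rw [hZ, ← mul_kronecker_mul, Matrix.one_mul, mul_one_kronecker_mul_transpose hH,
      mul_one_kronecker_mul_transpose hH, Matrix.mul_smul]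
  have hPZ : (clsProjection X H * (Xᵀ * X)⁻¹).trace = G⁻¹.trace := by
    rw [trace_clsProjection_mul, hHZZH, Matrix.mul_assoc, mul_nonsing_inv _ hHZH_unit,
      Matrix.mul_one]
  rw [clsErrorMatrix_mul_transpose hGram_unit hHZH_unit, trace_sub, hPZ, hZ, trace_kronecker,
    trace_one]
  ring

end BlockDiagonalDesign

theorem cls_error_bound_general
    {Ω : Type*} [MeasureSpace Ω]
    (n M v : ℕ) (hn : 1 ≤ n)
    (X₀ : Matrix (Fin M) (Fin v) ℝ) (hX₀ : IsUnit (X₀ᵀ * X₀).det)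
    (N : ℝ)
    (D : Fin v → ℝ) (Θ : Fin n × Fin v → ℝ)
    (X : Matrix (Fin n × Fin M) (Fin n × Fin v) ℝ)
    (hX : X = (1 : Matrix (Fin n) (Fin n) ℝ) ⊗ₖ X₀)
    (H : Matrix (Fin v) (Fin n × Fin v) ℝ)
    (hH : ∀ a i, H a i = if i.2 = a then 1 else 0)
    (hΘ : H.mulVec Θ = D)
    (e : Ω → Fin n × Fin M → ℝ)
    (he : ∀ i j, Integrable fun ω => e ω i * e ω j)
    (hcov : (((M : ℝ) / (4 * N)) • (1 : Matrix (Fin n × Fin M) (Fin n × Fin M) ℝ)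
        - Matrix.of fun i j => ∫ ω, e ω i * e ω j).PosSemidef)
    (Z : Matrix (Fin n × Fin v) (Fin n × Fin v) ℝ) (hZ : Z = (Xᵀ * X)⁻¹)
    (Yhat : Ω → Fin n × Fin M → ℝ) (hYhat : ∀ ω, Yhat ω = X.mulVec Θ + e ω)
    (ΘLS : Ω → Fin n × Fin v → ℝ)
    (hLS : ∀ ω, ΘLS ω = Z.mulVec (Xᵀ.mulVec (Yhat ω)))
    (ΘCLS : Ω → Fin n × Fin v → ℝ)
    (hCLS : ∀ ω, ΘCLS ω = ΘLS ω
        - (Z * Hᵀ * (H * Z * Hᵀ)⁻¹).mulVec (H.mulVec (ΘLS ω) - D)) :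
    ∫ ω, ∑ i, (ΘCLS ω i - Θ i) ^ 2
      ≤ ((n : ℝ) - 1) * M / (4 * N) * ((X₀ᵀ * X₀)⁻¹).trace := by
  have : Nonempty (Fin n) := ⟨⟨0, hn⟩⟩
  have hGram_unit : IsUnit (Xᵀ * X).det := hX ▸ isUnit_det_one_kronecker_transpose_mul_self hX₀
  have herr : ∀ ω, ΘCLS ω - Θ = clsErrorMatrix X H *ᵥ e ω := fun ω => by
    rw [hCLS, hLS, hYhat, hZ, leastSquares_eq_add_mulVec hGram_unit,
      cls_sub_eq_clsErrorMatrix_mulVec X H hΘ]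
  calc ∫ ω, ∑ i, (ΘCLS ω i - Θ i) ^ 2
      = ∫ ω, ∑ i, (clsErrorMatrix X H *ᵥ e ω) i ^ 2 := by simp_rw [← herr, Pi.sub_apply]
    _ ≤ (M : ℝ) / (4 * N) * (clsErrorMatrix X H * (clsErrorMatrix X H)ᵀ).trace :=
      integral_sum_sq_mulVec_le he hcov _
    _ = ((n : ℝ) - 1) * M / (4 * N) * ((X₀ᵀ * X₀)⁻¹).trace := by
      rw [trace_clsErrorMatrix_mul_transpose_of_eq_one_kronecker hX₀ hX hH, Fintype.card_fin]
      ring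

/-- error bound for the constrained least-squares estimator. -/
theorem cls_error_bound
    {Ω : Type*} [MeasureSpace Ω] [IsProbabilityMeasure (volume : Measure Ω)]
    (n M v : ℕ) (hn : 1 ≤ n) (hM : 0 < M)
    (X₀ : Matrix (Fin M) (Fin v) ℝ) (hX₀ : IsUnit (X₀ᵀ * X₀).det)
    (N : ℝ) (hN : 0 < N)
    (D : Fin v → ℝ) (Θ : Fin n × Fin v → ℝ)
    (X : Matrix (Fin n × Fin M) (Fin n × Fin v) ℝ)
    (hX : X = (1 : Matrix (Fin n) (Fin n) ℝ) ⊗ₖ X₀)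
    (H : Matrix (Fin v) (Fin n × Fin v) ℝ)
    (hH : ∀ a i, H a i = if i.2 = a then 1 else 0)
    (hΘ : H.mulVec Θ = D)
    (e : Ω → Fin n × Fin M → ℝ)
    (he : ∀ i j, Integrable fun ω => e ω i * e ω j)
    (hcov : (((M : ℝ) / (4 * N)) • (1 : Matrix (Fin n × Fin M) (Fin n × Fin M) ℝ)
        - Matrix.of fun i j => ∫ ω, e ω i * e ω j).PosSemidef)
    (Z : Matrix (Fin n × Fin v) (Fin n × Fin v) ℝ) (hZ : Z = (Xᵀ * X)⁻¹)
    (Yhat : Ω → Fin n × Fin M → ℝ) (hYhat : ∀ ω, Yhat ω = X.mulVec Θ + e ω)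
    (ΘLS : Ω → Fin n × Fin v → ℝ)
    (hLS : ∀ ω, ΘLS ω = Z.mulVec (Xᵀ.mulVec (Yhat ω)))
    (ΘCLS : Ω → Fin n × Fin v → ℝ)
    (hCLS : ∀ ω, ΘCLS ω = ΘLS ω
        - (Z * Hᵀ * (H * Z * Hᵀ)⁻¹).mulVec (H.mulVec (ΘLS ω) - D)) :
    ∫ ω, ∑ i, (ΘCLS ω i - Θ i) ^ 2
      ≤ ((n : ℝ) - 1) * M / (4 * N) * ((X₀ᵀ * X₀)⁻¹).trace :=
  cls_error_bound_general n M v hn X₀ hX₀ N D Θ X hX H hH hΘ e he hcov Z hZ Yhat hYhat ΘLS hLS ΘCLS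
    hCLS
end

section
/- Let X be a real M'×p matrix with XᵀX invertible and let H be a real r×p matrix such that H(XᵀX)⁻¹Hᵀ is invertible. Set Z = (XᵀX)⁻¹ and A = ZXᵀ − ZHᵀ(HZHᵀ)⁻¹HZXᵀ. Then Tr(AAᵀ) = Tr(Z) − Tr[(HZHᵀ)⁻¹HZ²Hᵀ]. -/
open Matrix

/-- with Z = (XᵀX)⁻¹ and A = ZXᵀ − ZHᵀ(HZHᵀ)⁻¹HZXᵀ,
one has Tr(AAᵀ) = Tr(Z) − Tr[(HZHᵀ)⁻¹HZ²Hᵀ]. -/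
theorem trace_cls_projection
    (M' p r : ℕ)
    (X : Matrix (Fin M') (Fin p) ℝ) (hX : IsUnit (Xᵀ * X).det)
    (H : Matrix (Fin r) (Fin p) ℝ)
    (hH : IsUnit (H * (Xᵀ * X)⁻¹ * Hᵀ).det)
    (Z : Matrix (Fin p) (Fin p) ℝ) (hZ : Z = (Xᵀ * X)⁻¹)
    (A : Matrix (Fin p) (Fin M') ℝ)
    (hA : A = Z * Xᵀ - Z * Hᵀ * (H * Z * Hᵀ)⁻¹ * (H * Z * Xᵀ)) :
    (A * Aᵀ).trace = Z.trace - ((H * Z * Hᵀ)⁻¹ * (H * (Z * Z) * Hᵀ)).trace := by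
  have hZt : Zᵀ = Z := by
    rw [hZ, Matrix.transpose_nonsing_inv, Matrix.transpose_mul, Matrix.transpose_transpose]
  have hSZ : (Xᵀ * X) * Z = 1 := by rw [hZ]; exact Matrix.mul_nonsing_inv _ hX
  have hH' : IsUnit (H * Z * Hᵀ).det := by rwa [hZ]
  set W := (H * Z * Hᵀ)⁻¹ with hWdef
  have hWt : Wᵀ = W := by
    rw [hWdef, Matrix.transpose_nonsing_inv, Matrix.transpose_mul, Matrix.transpose_mul,
      Matrix.transpose_transpose, hZt, Matrix.mul_assoc]
  have hW : W * (H * Z * Hᵀ) = 1 := Matrix.nonsing_inv_mul _ hH'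
  have h1 : Xᵀ * (X * Z) = 1 := by rw [← Matrix.mul_assoc]; exact hSZ
  have h2 : ∀ {n : Type} (c : Matrix (Fin p) n ℝ), Xᵀ * (X * (Z * c)) = c := by
    intro n c
    rw [← Matrix.mul_assoc, ← Matrix.mul_assoc, hSZ, Matrix.one_mul]
  have h3 : ∀ {n : Type} (c : Matrix (Fin r) n ℝ), W * (H * (Z * (Hᵀ * c))) = c := by
    intro n c
    rw [show W * (H * (Z * (Hᵀ * c))) = (W * (H * Z * Hᵀ)) * c by simp [Matrix.mul_assoc],
      hW, Matrix.one_mul]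
  have hAt : Aᵀ = X * Z - X * Z * Hᵀ * W * (H * Z) := by
    simp [hA, Matrix.transpose_mul, hZt, hWt, Matrix.mul_assoc]
  have key : A * Aᵀ = Z - Z * Hᵀ * W * (H * Z) := by
    rw [hAt, hA, Matrix.sub_mul, Matrix.mul_sub, Matrix.mul_sub]
    simp only [Matrix.mul_assoc, h1, h2, h3, Matrix.mul_one]
    abel
  rw [key, Matrix.trace_sub]
  congr 1
  rw [show Z * Hᵀ * W * (H * Z) = (Z * Hᵀ) * (W * (H * Z)) by
    simp [Matrix.mul_assoc], Matrix.trace_mul_comm]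
  congr 1
  simp [Matrix.mul_assoc]
end

section
/- Let X be a real m×p matrix, H a real r×p matrix, Y ∈ ℝᵐ, D ∈ ℝʳ, and η > 0 such that H(XᵀX + ηI)⁻¹Hᵀ is invertible. Set Z_η = (XᵀX + ηI)⁻¹, Θ̂_LS = Z_ηXᵀY and Θ̂ = Θ̂_LS − Z_ηHᵀ(HZ_ηHᵀ)⁻¹(HΘ̂_LS − D). Then HΘ̂ = D, and for every Θ ∈ ℝᵖ with HΘ = D one has ‖Y − XΘ̂‖² + η‖Θ̂‖² ≤ ‖Y − XΘ‖² + η‖Θ‖²; i.e., Θ̂ minimizes the Tikhonov-regularized cost ‖Y − XΘ‖² + η‖Θ‖² subject to HΘ = D. -/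
/-!
With `A = XᵀX + ηI`, the cost is `‖Y‖² - 2⟪XᵀY, Θ⟫ + ⟪Θ, AΘ⟫`, a convex quadratic. The estimator
`Θ̂` satisfies the constraint and the Lagrange condition `AΘ̂ - XᵀY = -Hᵀλ` with
`λ = (HZ_ηHᵀ)⁻¹(HΘ̂_LS - D)`. For feasible `Θ` the step `d = Θ - Θ̂` lies in `ker H`, which is orthogonal
to `Hᵀλ`, so expanding the quadratic around `Θ̂` leaves only the nonnegative term `⟪d, Ad⟫`.
-/

open Matrix

namespace Matrix

variable {n : Type*} [Fintype n]

theorem PosSemidef.quadratic_le_of_dotProduct_eq_zero {A : Matrix n n ℝ} (hA : A.PosSemidef)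
    {b x y : n → ℝ} (h : (A *ᵥ x - b) ⬝ᵥ (y - x) = 0) :
    x ⬝ᵥ A *ᵥ x - 2 * (b ⬝ᵥ x) ≤ y ⬝ᵥ A *ᵥ y - 2 * (b ⬝ᵥ y) := by
  obtain ⟨d, rfl⟩ : ∃ d, y = x + d := ⟨y - x, by abel⟩
  have hsymm : x ⬝ᵥ A *ᵥ d = A *ᵥ x ⬝ᵥ d := by
    rw [dotProduct_mulVec, ← mulVec_transpose, ← conjTranspose_eq_transpose_of_trivial,
      hA.isHermitian.eq]
  have hexpand :
      (x + d) ⬝ᵥ A *ᵥ (x + d) = x ⬝ᵥ A *ᵥ x + 2 * (A *ᵥ x ⬝ᵥ d) + d ⬝ᵥ A *ᵥ d := by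
    simp only [mulVec_add, dotProduct_add, add_dotProduct]
    rw [hsymm, dotProduct_comm d (A *ᵥ x)]
    ring
  have hd : 0 ≤ d ⬝ᵥ A *ᵥ d := by simpa using hA.dotProduct_mulVec_nonneg d
  rw [add_sub_cancel_left, sub_dotProduct] at h
  rw [hexpand, dotProduct_add]
  linarith

theorem sum_sq_eq_dotProduct {R : Type*} [CommSemiring R] (w : n → R) :
    ∑ i, w i ^ 2 = w ⬝ᵥ w := by
  simp only [dotProduct, sq]

section Tikhonov

variable [DecidableEq n] {m : Type*} [Fintype m]

theorem PosDef.transpose_mul_self_add_smul_one (X : Matrix m n ℝ) {η : ℝ} (hη : 0 < η) :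
    (Xᵀ * X + η • (1 : Matrix n n ℝ)).PosDef :=
  PosDef.posSemidef_add (posSemidef_conjTranspose_mul_self X) (PosDef.one.smul hη)

theorem tikhonov_cost_eq (X : Matrix m n ℝ) (η : ℝ) (Y : m → ℝ) (v : n → ℝ) :
    ∑ i, (Y i - (X *ᵥ v) i) ^ 2 + η * ∑ j, v j ^ 2
      = Y ⬝ᵥ Y - 2 * (Xᵀ *ᵥ Y ⬝ᵥ v) + v ⬝ᵥ (Xᵀ * X + η • (1 : Matrix n n ℝ)) *ᵥ v := by
  have hres : ∑ i, (Y i - (X *ᵥ v) i) ^ 2 = (Y - X *ᵥ v) ⬝ᵥ (Y - X *ᵥ v) :=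
    sum_sq_eq_dotProduct _
  have hcross : Y ⬝ᵥ X *ᵥ v = Xᵀ *ᵥ Y ⬝ᵥ v := by
    rw [dotProduct_mulVec, ← mulVec_transpose]
  have hgram : X *ᵥ v ⬝ᵥ X *ᵥ v = v ⬝ᵥ (Xᵀ * X) *ᵥ v := by
    rw [← mulVec_mulVec, dotProduct_mulVec v, ← mulVec_transpose, transpose_transpose,
      dotProduct_comm]
  rw [hres, sum_sq_eq_dotProduct v, add_mulVec, smul_mulVec, one_mulVec, dotProduct_add,
    dotProduct_smul, sub_dotProduct, dotProduct_sub, dotProduct_sub,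
    dotProduct_comm (X *ᵥ v) Y, hcross, hgram, smul_eq_mul]
  ring

end Tikhonov

section ObliqueProjection

variable {R : Type*} [CommRing R] {k : Type*} [Fintype k]

theorem mulVec_obliqueProj_eq [DecidableEq k] {H : Matrix k n R} {Z : Matrix n n R} {G : Matrix n k R}
    (hM : IsUnit (H * Z * G).det) (x : n → R) (c : k → R) :
    H *ᵥ (x - (Z * G * (H * Z * G)⁻¹) *ᵥ (H *ᵥ x - c)) = c := by
  rw [mulVec_sub, mulVec_mulVec, ← Matrix.mul_assoc, ← Matrix.mul_assoc,
    mul_nonsing_inv _ hM, one_mulVec, sub_sub_cancel]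

theorem mulVec_sub_of_mul_eq_one [DecidableEq n] {A Z : Matrix n n R} (hAZ : A * Z = 1)
    (G : Matrix n k R) (N : Matrix k k R) (b : n → R) (c : k → R) :
    A *ᵥ (Z *ᵥ b - (Z * G * N) *ᵥ c) = b - G *ᵥ (N *ᵥ c) := by
  rw [mulVec_sub, mulVec_mulVec, hAZ, one_mulVec, mulVec_mulVec, Matrix.mul_assoc,
    ← Matrix.mul_assoc A, hAZ, Matrix.one_mul, mulVec_mulVec]

end ObliqueProjection

end Matrix

/-- the constrained Tikhonov-regularized estimator satisfies the
constraint and minimizes ‖Y − XΘ‖² + η‖Θ‖² subject to HΘ = D. -/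
theorem tikhonov_cls_optimality
    (m p r : ℕ)
    (X : Matrix (Fin m) (Fin p) ℝ)
    (H : Matrix (Fin r) (Fin p) ℝ)
    (Y : Fin m → ℝ) (D : Fin r → ℝ)
    (η : ℝ) (hη : 0 < η)
    (hH : IsUnit (H * (Xᵀ * X + η • (1 : Matrix (Fin p) (Fin p) ℝ))⁻¹ * Hᵀ).det)
    (Zη : Matrix (Fin p) (Fin p) ℝ)
    (hZη : Zη = (Xᵀ * X + η • (1 : Matrix (Fin p) (Fin p) ℝ))⁻¹)
    (ΘLS : Fin p → ℝ) (hLS : ΘLS = Zη.mulVec (Xᵀ.mulVec Y))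
    (Θhat : Fin p → ℝ)
    (hΘhat : Θhat = ΘLS - (Zη * Hᵀ * (H * Zη * Hᵀ)⁻¹).mulVec (H.mulVec ΘLS - D)) :
    H.mulVec Θhat = D ∧
    ∀ Θ : Fin p → ℝ, H.mulVec Θ = D →
      (∑ i, (Y i - X.mulVec Θhat i) ^ 2) + η * ∑ j, (Θhat j) ^ 2
        ≤ (∑ i, (Y i - X.mulVec Θ i) ^ 2) + η * ∑ j, (Θ j) ^ 2 := by
  set A := Xᵀ * X + η • (1 : Matrix (Fin p) (Fin p) ℝ)
  have hA : A.PosDef := PosDef.transpose_mul_self_add_smul_one X hη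
  have hAZ : A * Zη = 1 := hZη ▸ mul_nonsing_inv A (isUnit_iff_isUnit_det A |>.mp hA.isUnit)
  have hfeasible : H *ᵥ Θhat = D := hΘhat ▸ mulVec_obliqueProj_eq (hZη ▸ hH) ΘLS D
  refine ⟨hfeasible, fun Θ hΘ => ?_⟩
  set L := (H * Zη * Hᵀ)⁻¹ *ᵥ (H *ᵥ ΘLS - D)
  have hLagrange : A *ᵥ Θhat - Xᵀ *ᵥ Y = -(Hᵀ *ᵥ L) := by
    rw [hΘhat]
    nth_rw 1 [hLS]
    rw [mulVec_sub_of_mul_eq_one hAZ, sub_sub_cancel_left]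
  have hker : H *ᵥ (Θ - Θhat) = 0 := by rw [mulVec_sub, hΘ, hfeasible, sub_self]
  have horth : (A *ᵥ Θhat - Xᵀ *ᵥ Y) ⬝ᵥ (Θ - Θhat) = 0 := by
    rw [hLagrange, neg_dotProduct, mulVec_transpose, ← dotProduct_mulVec, hker,
      dotProduct_zero, neg_zero]
  rw [tikhonov_cost_eq, tikhonov_cost_eq]
  linarith [hA.posSemidef.quadratic_le_of_dotProduct_eq_zero horth]
end

section
/- Let n ≥ 1 and let X₀ be a real M×v matrix with X₀ᵀX₀ invertible. Set X = Iₙ ⊗ X₀, H = (1,...,1)₁ₓₙ ⊗ I_v, Z = (XᵀX)⁻¹, and D ∈ ℝᵛ. Let Ŷ ∈ ℝ^{nM} be partitioned into blocks Ŷ = (Ŷ₁ᵀ,...,Ŷₙᵀ)ᵀ with each Ŷᵢ ∈ ℝᴹ, and set Y₀ = Σᵢ₌₁ⁿ Ŷᵢ. Define Θ̂_CLS = Θ̂_LS − ZHᵀ(HZHᵀ)⁻¹(HΘ̂_LS − D) with Θ̂_LS = ZXᵀŶ. Then, partitioning Θ̂_CLS = (Θ̂₁ᵀ,...,Θ̂ₙᵀ)ᵀ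 into v-dimensional blocks, for every 1 ≤ i ≤ n: Θ̂ᵢ = (X₀ᵀX₀)⁻¹X₀ᵀ(Ŷᵢ − Y₀/n) + D/n. -/
open Matrix
open scoped Kronecker

/-- blockwise formula for the CLS estimator:
Θ̂ᵢ = (X₀ᵀX₀)⁻¹X₀ᵀ(Ŷᵢ − Y₀/n) + D/n. -/
theorem cls_block_formula
    (n M v : ℕ) (hn : 1 ≤ n)
    (X₀ : Matrix (Fin M) (Fin v) ℝ) (hX₀ : IsUnit (X₀ᵀ * X₀).det)
    (X : Matrix (Fin n × Fin M) (Fin n × Fin v) ℝ)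
    (hX : X = (1 : Matrix (Fin n) (Fin n) ℝ) ⊗ₖ X₀)
    (H : Matrix (Fin v) (Fin n × Fin v) ℝ)
    (hH : ∀ a i, H a i = if i.2 = a then 1 else 0)
    (Z : Matrix (Fin n × Fin v) (Fin n × Fin v) ℝ) (hZ : Z = (Xᵀ * X)⁻¹)
    (D : Fin v → ℝ)
    (Yhat : Fin n × Fin M → ℝ)
    (Y₀ : Fin M → ℝ) (hY₀ : Y₀ = ∑ i : Fin n, fun j => Yhat (i, j))
    (ΘLS : Fin n × Fin v → ℝ) (hLS : ΘLS = Z.mulVec (Xᵀ.mulVec Yhat))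
    (ΘCLS : Fin n × Fin v → ℝ)
    (hCLS : ΘCLS = ΘLS - (Z * Hᵀ * (H * Z * Hᵀ)⁻¹).mulVec (H.mulVec ΘLS - D)) :
    ∀ (i : Fin n) (a : Fin v),
      ΘCLS (i, a) =
        ((X₀ᵀ * X₀)⁻¹ * X₀ᵀ).mulVec (fun j => Yhat (i, j) - Y₀ j / n) a
          + D a / n := by
  intro i a
  have hn0 : (n : ℝ) ≠ 0 := Nat.cast_ne_zero.mpr (Nat.one_le_iff_ne_zero.mp hn)
  set A := X₀ᵀ * X₀ with hAdef
  have hZ' : Z = (1 : Matrix (Fin n) (Fin n) ℝ) ⊗ₖ A⁻¹ := by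
    rw [hZ, hX, ← Matrix.kroneckerMap_transpose, Matrix.transpose_one,
      ← Matrix.mul_kronecker_mul, Matrix.one_mul, Matrix.inv_kronecker, inv_one]
  have hBA : A⁻¹ * A = 1 := Matrix.nonsing_inv_mul A hX₀
  have hHZH : H * Z * Hᵀ = (n : ℝ) • A⁻¹ := by
    ext b c
    simp [Matrix.mul_apply, hH, hZ', Fintype.sum_prod_type, Matrix.one_apply,
      Finset.mul_sum, Finset.sum_mul]
  have hinv : (H * Z * Hᵀ)⁻¹ = (n : ℝ)⁻¹ • A := by
    rw [hHZH]
    refine Matrix.inv_eq_right_inv ?_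
    rw [Matrix.smul_mul, Matrix.mul_smul, smul_smul, mul_inv_cancel₀ hn0, hBA, one_smul]
  -- entry formula for ΘLS
  have hLSe : ∀ (j : Fin n) (c : Fin v),
      ΘLS (j, c) = (A⁻¹ * X₀ᵀ).mulVec (fun m => Yhat (j, m)) c := by
    intro j c
    simp [hLS, hZ', hX, Matrix.mulVec, Matrix.mul_apply, dotProduct,
      Fintype.sum_prod_type, Matrix.one_apply, Finset.mul_sum, Finset.sum_mul]
  have hHLS : ∀ c : Fin v, H.mulVec ΘLS c = (A⁻¹ * X₀ᵀ).mulVec Y₀ c := by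
    intro c
    simp only [Matrix.mulVec, dotProduct, Fintype.sum_prod_type, hH, ite_mul, one_mul, zero_mul,
      Finset.sum_ite_eq', Finset.mem_univ, if_true, hLSe, hY₀, Finset.sum_apply, Finset.mul_sum]
    rw [Finset.sum_comm]
    rw [Finset.sum_eq_single c]
    · simp only [if_pos rfl]
      rw [Finset.sum_comm]
      simp
    · intro b _ hb; simp [hb]
    · simp
  -- entry formula for the correction matrix
  have hK : ∀ (c : Fin v),
      (Z * Hᵀ * (H * Z * Hᵀ)⁻¹) (i, a) c = (n : ℝ)⁻¹ * (1 : Matrix (Fin v) (Fin v) ℝ) a c := by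
    intro c
    rw [hinv]
    simp only [Matrix.mul_apply, hZ', hH, Matrix.transpose_apply, Matrix.smul_apply,
      Fintype.sum_prod_type, Matrix.kroneckerMap_apply, Matrix.one_apply, smul_eq_mul]
    simp [Finset.sum_ite_eq, Finset.mul_sum, mul_comm, mul_left_comm, ← Matrix.mul_apply, hBA]
    rw [show (∑ x : Fin v, A x c * (A⁻¹ a x * (n : ℝ)⁻¹))
        = (A⁻¹ * A) a c * (n : ℝ)⁻¹ by
      rw [Matrix.mul_apply, Finset.sum_mul]
      exact Finset.sum_congr rfl fun x _ => by ring]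
    rw [hBA]
    simp [Matrix.one_apply]
  have key : ΘCLS (i, a) = ΘLS (i, a) - (n : ℝ)⁻¹ * ((A⁻¹ * X₀ᵀ).mulVec Y₀ a - D a) := by
    rw [hCLS]
    simp only [Pi.sub_apply, Matrix.mulVec, dotProduct, hK, Matrix.one_apply]
    rw [Finset.sum_eq_single a]
    · have := hHLS a
      simp only [Matrix.mulVec, dotProduct] at this
      simp [this]
    · intro b _ hb; simp [Ne.symm hb]
    · simp
  rw [key, hLSe]
  simp only [Matrix.mulVec, dotProduct, mul_sub, Finset.sum_sub_distrib]
  have hx : ∀ x : Fin M, (A⁻¹ * X₀ᵀ) a x * (Y₀ x / (n : ℝ))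
      = (n : ℝ)⁻¹ * ((A⁻¹ * X₀ᵀ) a x * Y₀ x) := fun x => by ring
  simp only [hx, ← Finset.mul_sum]
  ring
end

section
/- Let E be a d×d Hermitian complex matrix with spectral decomposition E = Σⱼ λⱼ vⱼvⱼ†, and let E₋ = −Σ_{j : λⱼ < 0} λⱼ vⱼvⱼ† be its negative part. Then for every pair of positive semidefinite d×d matrices F and G with E = F − G, one has ‖G‖ ≥ ‖E₋‖ (equivalently, ‖G‖² ≥ Σ_{j : λⱼ < 0} λⱼ²). Moreover the bound is attained: F = E₊ (the positive part) and G = E₋ are positive semidefinite with E = E₊ − E₋ and ‖E₋‖ = ‖E₋‖. -/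
/-!
Conjugating by the eigenvector unitary `U` of `E` leaves the Frobenius norm unchanged and turns
`E = F - G` into `diag λ = F' - G'` with `F' = Uᴴ F U` positive semidefinite. Hence the diagonal
entries satisfy `Re G'ⱼⱼ = F'ⱼⱼ - λⱼ ≥ -λⱼ`, and the diagonal part of `G'` alone already gives
`‖G‖² = ‖G'‖² ≥ Σⱼ (Re G'ⱼⱼ)² ≥ Σ_{λⱼ<0} λⱼ² = ‖E₋‖²`.
-/

open Matrix
open scoped ComplexOrder

/-- Frobenius norm of a complex matrix. -/
noncomputable def frob {d : ℕ} (A : Matrix (Fin d) (Fin d) ℂ) : ℝ :=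
  Real.sqrt ((Aᴴ * A).trace).re

/-- Positive part E₊ = Σ_{λⱼ>0} λⱼ vⱼvⱼ† of a Hermitian matrix. -/
noncomputable def hermPosPart {d : ℕ} {E : Matrix (Fin d) (Fin d) ℂ}
    (hE : E.IsHermitian) : Matrix (Fin d) (Fin d) ℂ :=
  (hE.eigenvectorUnitary : Matrix (Fin d) (Fin d) ℂ) *
    Matrix.diagonal (fun j => ((max (hE.eigenvalues j) 0 : ℝ) : ℂ)) *
    (hE.eigenvectorUnitary : Matrix (Fin d) (Fin d) ℂ)ᴴ

/-- Negative part E₋ = −Σ_{λⱼ<0} λⱼ vⱼvⱼ† of a Hermitian matrix. -/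
noncomputable def hermNegPart {d : ℕ} {E : Matrix (Fin d) (Fin d) ℂ}
    (hE : E.IsHermitian) : Matrix (Fin d) (Fin d) ℂ :=
  (hE.eigenvectorUnitary : Matrix (Fin d) (Fin d) ℂ) *
    Matrix.diagonal (fun j => ((max (-hE.eigenvalues j) 0 : ℝ) : ℂ)) *
    (hE.eigenvectorUnitary : Matrix (Fin d) (Fin d) ℂ)ᴴ

variable {d : ℕ}

lemma re_trace_conjTranspose_mul_self_eq_sum {m n : Type*} [Fintype m] [Fintype n]
    (A : Matrix m n ℂ) :
    ((Aᴴ * A).trace).re = ∑ j, ∑ i, Complex.normSq (A i j) := by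
  simp only [trace, diag, mul_apply, conjTranspose_apply, Complex.re_sum]
  refine Finset.sum_congr rfl fun j _ => Finset.sum_congr rfl fun i _ => ?_
  simp [Complex.normSq_apply, Complex.mul_re]

lemma frob_nonneg (A : Matrix (Fin d) (Fin d) ℂ) : 0 ≤ frob A :=
  Real.sqrt_nonneg _

lemma frob_sq (A : Matrix (Fin d) (Fin d) ℂ) : frob A ^ 2 = ((Aᴴ * A).trace).re :=
  Real.sq_sqrt (Complex.nonneg_iff.mp (posSemidef_conjTranspose_mul_self A).trace_nonneg).1

lemma frob_sq_eq_sum_normSq (A : Matrix (Fin d) (Fin d) ℂ) :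
    frob A ^ 2 = ∑ j, ∑ i, Complex.normSq (A i j) := by
  rw [frob_sq, re_trace_conjTranspose_mul_self_eq_sum]

lemma frob_mul_mul_conjTranspose {U : Matrix (Fin d) (Fin d) ℂ} (hU : Uᴴ * U = 1)
    (A : Matrix (Fin d) (Fin d) ℂ) : frob (U * A * Uᴴ) = frob A := by
  have hconj : (U * A * Uᴴ)ᴴ * (U * A * Uᴴ) = U * (Aᴴ * A) * Uᴴ := by
    simp only [conjTranspose_mul, conjTranspose_conjTranspose, Matrix.mul_assoc]
    rw [← Matrix.mul_assoc Uᴴ U, hU, Matrix.one_mul]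
  rw [frob, frob, hconj, trace_mul_cycle, ← Matrix.mul_assoc, hU, Matrix.one_mul]

lemma frob_diagonal_ofReal_sq (v : Fin d → ℝ) :
    frob (diagonal fun j => (v j : ℂ)) ^ 2 = ∑ j, v j ^ 2 := by
  rw [frob_sq_eq_sum_normSq]
  refine Finset.sum_congr rfl fun j _ => ?_
  rw [Finset.sum_eq_single j (fun i _ hij => by simp [diagonal_apply_ne _ hij]) (by simp)]
  simp [sq]

lemma sum_sq_re_diag_le_frob_sq (A : Matrix (Fin d) (Fin d) ℂ) :
    ∑ j, (A j j).re ^ 2 ≤ frob A ^ 2 := by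
  rw [frob_sq_eq_sum_normSq]
  refine Finset.sum_le_sum fun j _ => ?_
  calc (A j j).re ^ 2 ≤ Complex.normSq (A j j) := by
        rw [Complex.normSq_apply]; nlinarith [sq_nonneg (A j j).im]
    _ ≤ ∑ i, Complex.normSq (A i j) :=
        Finset.single_le_sum (f := fun i => Complex.normSq (A i j))
          (fun i _ => Complex.normSq_nonneg _) (Finset.mem_univ j)

lemma sum_sq_neg_le_frob_sq_of_diagonal_eq_sub {μ : Fin d → ℝ} {F G : Matrix (Fin d) (Fin d) ℂ}
    (hF : F.PosSemidef) (h : diagonal (fun j => (μ j : ℂ)) = F - G) :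
    (∑ j, if μ j < 0 then μ j ^ 2 else 0) ≤ frob G ^ 2 := by
  refine le_trans (Finset.sum_le_sum fun j _ => ?_) (sum_sq_re_diag_le_frob_sq G)
  have hFjj : 0 ≤ (F j j).re := (Complex.nonneg_iff.mp hF.diag_nonneg).1
  have hGjj : μ j = (F j j).re - (G j j).re := by
    simpa using congrArg (fun M : Matrix (Fin d) (Fin d) ℂ => (M j j).re) h
  split_ifs with hμ
  · nlinarith
  · positivity

namespace Matrix.IsHermitian

variable {E : Matrix (Fin d) (Fin d) ℂ} (hE : E.IsHermitian)

local notation "U" => (hE.eigenvectorUnitary : Matrix (Fin d) (Fin d) ℂ)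

lemma conjTranspose_eigenvectorUnitary_mul_self : Uᴴ * U = 1 :=
  Unitary.coe_star_mul_self hE.eigenvectorUnitary

lemma eigenvectorUnitary_mul_conjTranspose_self : U * Uᴴ = 1 :=
  Unitary.coe_mul_star_self hE.eigenvectorUnitary

lemma conjTranspose_eigenvectorUnitary_mul_mul :
    Uᴴ * E * U = diagonal fun j => (hE.eigenvalues j : ℂ) := by
  simpa [Function.comp_def, star_eq_conjTranspose] using hE.conjStarAlgAut_star_eigenvectorUnitary

lemma sum_sq_neg_eigenvalues_le_frob_sq {F G : Matrix (Fin d) (Fin d) ℂ} (hF : F.PosSemidef)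
    (h : E = F - G) :
    (∑ j, if hE.eigenvalues j < 0 then hE.eigenvalues j ^ 2 else 0) ≤ frob G ^ 2 := by
  have hconj : diagonal (fun j => (hE.eigenvalues j : ℂ)) = Uᴴ * F * U - Uᴴ * G * U := by
    rw [← Matrix.sub_mul, ← Matrix.mul_sub, ← h, hE.conjTranspose_eigenvectorUnitary_mul_mul]
  have hGconj : frob (Uᴴ * G * U) = frob G := by
    have hU' : Uᴴᴴ * Uᴴ = 1 := by
      rw [conjTranspose_conjTranspose]; exact hE.eigenvectorUnitary_mul_conjTranspose_self
    simpa only [conjTranspose_conjTranspose] using frob_mul_mul_conjTranspose hU' G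
  rw [← hGconj]
  exact sum_sq_neg_le_frob_sq_of_diagonal_eq_sub (hF.conjTranspose_mul_mul_same U) hconj

lemma frob_hermNegPart_sq :
    frob (hermNegPart hE) ^ 2 = ∑ j, if hE.eigenvalues j < 0 then hE.eigenvalues j ^ 2 else 0 := by
  rw [hermNegPart, frob_mul_mul_conjTranspose hE.conjTranspose_eigenvectorUnitary_mul_self,
    frob_diagonal_ofReal_sq]
  refine Finset.sum_congr rfl fun j _ => ?_
  split_ifs with hneg
  · rw [max_eq_left (by linarith), neg_sq]
  · rw [max_eq_right (by linarith)]; simp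

lemma hermPosPart_posSemidef : (hermPosPart hE).PosSemidef :=
  PosSemidef.mul_mul_conjTranspose_same
    (PosSemidef.diagonal fun _ => Complex.zero_le_real.mpr (le_max_right _ _)) U

lemma hermNegPart_posSemidef : (hermNegPart hE).PosSemidef :=
  PosSemidef.mul_mul_conjTranspose_same
    (PosSemidef.diagonal fun _ => Complex.zero_le_real.mpr (le_max_right _ _)) U

lemma hermPosPart_sub_hermNegPart : hermPosPart hE - hermNegPart hE = E := by
  have hdiag : (diagonal fun j => ((max (hE.eigenvalues j) 0 : ℝ) : ℂ)) -
      diagonal (fun j => ((max (-hE.eigenvalues j) 0 : ℝ) : ℂ)) =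
      diagonal fun j => (hE.eigenvalues j : ℂ) := by
    simp only [diagonal_sub, ← Complex.ofReal_sub, max_zero_sub_max_neg_zero_eq_self]
  rw [hermPosPart, hermNegPart, ← Matrix.sub_mul, ← Matrix.mul_sub, hdiag,
    ← hE.conjTranspose_eigenvectorUnitary_mul_mul, ← Matrix.mul_assoc, ← Matrix.mul_assoc,
    hE.eigenvectorUnitary_mul_conjTranspose_self, Matrix.one_mul, Matrix.mul_assoc,
    hE.eigenvectorUnitary_mul_conjTranspose_self, Matrix.mul_one]

end Matrix.IsHermitian

/-- among all decompositions E = F − G with F, G positive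
semidefinite, the negative part G = E₋ has minimal Frobenius norm;
moreover ‖E₋‖² = Σ_{λⱼ<0} λⱼ² and the bound is attained by (E₊, E₋). -/
theorem negPart_minimal_decomposition {d : ℕ}
    (E : Matrix (Fin d) (Fin d) ℂ) (hE : E.IsHermitian) :
    (∀ F G : Matrix (Fin d) (Fin d) ℂ, F.PosSemidef → G.PosSemidef →
      E = F - G → frob (hermNegPart hE) ≤ frob G) ∧
    (∀ F G : Matrix (Fin d) (Fin d) ℂ, F.PosSemidef → G.PosSemidef →
      E = F - G →
        (∑ j, if hE.eigenvalues j < 0 then (hE.eigenvalues j) ^ 2 else 0)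
          ≤ frob G ^ 2) ∧
    frob (hermNegPart hE) ^ 2
      = (∑ j, if hE.eigenvalues j < 0 then (hE.eigenvalues j) ^ 2 else 0) ∧
    (hermPosPart hE).PosSemidef ∧ (hermNegPart hE).PosSemidef ∧
    E = hermPosPart hE - hermNegPart hE := by
  refine ⟨fun F G hF _ h => ?_, fun F G hF _ h => hE.sum_sq_neg_eigenvalues_le_frob_sq hF h,
    hE.frob_hermNegPart_sq, hE.hermPosPart_posSemidef, hE.hermNegPart_posSemidef,
    hE.hermPosPart_sub_hermNegPart.symm⟩
  rw [← pow_le_pow_iff_left₀ (frob_nonneg _) (frob_nonneg _) two_ne_zero,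
    hE.frob_hermNegPart_sq]
  exact hE.sum_sq_neg_eigenvalues_le_frob_sq hF h
end

section
/- Let C be an invertible d×d complex matrix. Then for every d×d unitary matrix U, ‖CU − I‖ ≥ ‖√(CC†) − I‖, and equality holds for U = √(C†C)·C⁻¹. That is, the unitary U minimizing ‖CU − I‖ is Û = √(C†C)·C⁻¹, with minimal value ‖CÛ − I‖ = ‖√(CC†) − I‖. -/
open Matrix
open scoped ComplexOrder

/-- The square root of a positive semidefinite matrix (the definition of
`Matrix.PosSemidef.sqrt` in the older Mathlib, since removed). -/
noncomputable def Matrix.PosSemidef.sqrt {n 𝕜 : Type*} [Fintype n] [RCLike 𝕜] [DecidableEq n]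
    {A : Matrix n n 𝕜} (hA : A.PosSemidef) : Matrix n n 𝕜 :=
  hA.1.eigenvectorUnitary.1 * diagonal ((↑) ∘ (√·) ∘ hA.1.eigenvalues) *
  (star hA.1.eigenvectorUnitary : Matrix n n 𝕜)

/-!
Put `P = √(CC†)`. As `C` is invertible, `W = P⁻¹C` is unitary and `C = PW`. For unitary `U`,
`‖CU - I‖² = Tr(CC†) + d - 2 Re Tr(P·WU)` while `‖P - I‖² = Tr(CC†) + d - 2 Tr P`, so the
inequality is `Re Tr(PV) ≤ Tr P` for unitary `V`; this holds because
`2 (Tr P - Re Tr(PV)) = ‖√P - √P·V‖²`. For the minimiser, `C†C = W†(CC†)W` gives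
`√(C†C) = W†PW`, hence `C·√(C†C) = PWW†PW = PC` and `C·√(C†C)·C⁻¹ = P`.
-/

namespace Matrix

open scoped MatrixOrder

variable {n 𝕜 : Type*} [Fintype n] [DecidableEq n] [RCLike 𝕜]

lemma PosSemidef.sqrt_eq_cfcSqrt {A : Matrix n n 𝕜} (hA : A.PosSemidef) :
    hA.sqrt = CFC.sqrt A := by
  rw [CFC.sqrt_eq_cfc, cfc_nnreal_eq_real _ A hA.nonneg, hA.1.cfc_eq]
  unfold PosSemidef.sqrt IsHermitian.cfc
  rw [Unitary.conjStarAlgAut_apply]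
  unfold Real.sqrt
  rfl

lemma cfcSqrt_conjTranspose_mul_mul_of_mem_unitaryGroup {A U : Matrix n n 𝕜} (hA : A.PosSemidef)
    (hU : U ∈ unitaryGroup n 𝕜) : CFC.sqrt (Uᴴ * A * U) = Uᴴ * CFC.sqrt A * U := by
  have hUU : U * Uᴴ = 1 := mem_unitaryGroup_iff.mp hU
  refine CFC.sqrt_unique ?_ (star_left_conjugate_nonneg (CFC.sqrt_nonneg A) U)
  calc Uᴴ * CFC.sqrt A * U * (Uᴴ * CFC.sqrt A * U)
      = Uᴴ * (CFC.sqrt A * (U * Uᴴ) * CFC.sqrt A) * U := by simp only [mul_assoc]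
    _ = Uᴴ * A * U := by rw [hUU, mul_one, CFC.sqrt_mul_sqrt_self A hA.nonneg]

lemma re_trace_mul_le_of_mem_unitaryGroup {P V : Matrix n n 𝕜} (hP : P.PosSemidef)
    (hV : V ∈ unitaryGroup n 𝕜) : RCLike.re (P * V).trace ≤ RCLike.re P.trace := by
  set S := CFC.sqrt P
  have hSS : S * S = P := CFC.sqrt_mul_sqrt_self P hP.nonneg
  have hSH : Sᴴ = S := (CFC.sqrt_nonneg P).posSemidef.1
  have hVV : V * Vᴴ = 1 := mem_unitaryGroup_iff.mp hV
  have hX : ((S - S * V)ᴴ * (S - S * V)).trace =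
      2 * P.trace - (P * V).trace - star (P * V).trace := by
    have hexp : (S - S * V)ᴴ * (S - S * V) = P - P * V - (P * V)ᴴ + Vᴴ * P * V := by
      rw [conjTranspose_sub, conjTranspose_mul, conjTranspose_mul, hSH, hP.1.eq, ← hSS]
      noncomm_ring
    rw [hexp, trace_add, trace_sub, trace_sub, trace_conjTranspose, trace_mul_cycle, hVV, one_mul]
    ring
  have h0 : 0 ≤ RCLike.re ((S - S * V)ᴴ * (S - S * V)).trace :=
    (RCLike.nonneg_iff.mp (posSemidef_conjTranspose_mul_self _).trace_nonneg).1
  rw [hX] at h0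
  simp only [RCLike.star_def, map_sub, RCLike.mul_re, RCLike.ofNat_re, RCLike.ofNat_im, zero_mul,
    sub_zero, RCLike.conj_re, sub_nonneg] at h0
  linarith

lemma exists_mem_unitaryGroup_cfcSqrt_mul_eq {C : Matrix n n 𝕜} (hC : IsUnit C.det) :
    ∃ W ∈ unitaryGroup n 𝕜, CFC.sqrt (C * Cᴴ) * W = C := by
  set P := CFC.sqrt (C * Cᴴ)
  have hPP : P * P = C * Cᴴ := CFC.sqrt_mul_sqrt_self _ (posSemidef_self_mul_conjTranspose C).nonneg
  have hPH : Pᴴ = P := (CFC.sqrt_nonneg _).posSemidef.1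
  have hP : IsUnit P.det := by
    have h : P.det * P.det = C.det * star C.det := by
      rw [← det_mul, hPP, det_mul, det_conjTranspose]
    exact isUnit_of_mul_isUnit_left (h ▸ hC.mul hC.star)
  refine ⟨P⁻¹ * C, mem_unitaryGroup_iff.mpr ?_, mul_nonsing_inv_cancel_left P C hP⟩
  calc P⁻¹ * C * star (P⁻¹ * C) = P⁻¹ * (C * Cᴴ) * P⁻¹ := by
        rw [star_eq_conjTranspose, conjTranspose_mul, conjTranspose_nonsing_inv, hPH]
        simp only [mul_assoc]
    _ = 1 := by rw [← hPP, ← mul_assoc, nonsing_inv_mul P hP, one_mul, mul_nonsing_inv P hP]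

lemma re_trace_conjTranspose_mul_sub_one (A : Matrix n n 𝕜) :
    RCLike.re ((A - 1)ᴴ * (A - 1)).trace =
      RCLike.re (Aᴴ * A).trace - 2 * RCLike.re A.trace + Fintype.card n := by
  have h : (A - 1)ᴴ * (A - 1) = Aᴴ * A - Aᴴ - A + 1 := by
    rw [conjTranspose_sub, conjTranspose_one]
    noncomm_ring
  rw [h, trace_add, trace_sub, trace_sub, trace_one, trace_conjTranspose]
  simp only [RCLike.star_def, map_add, map_sub, RCLike.conj_re, RCLike.natCast_re]
  ring

lemma re_trace_cfcSqrt_sub_one_le {C U : Matrix n n 𝕜} (hC : IsUnit C.det)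
    (hU : U ∈ unitaryGroup n 𝕜) :
    RCLike.re ((CFC.sqrt (C * Cᴴ) - 1)ᴴ * (CFC.sqrt (C * Cᴴ) - 1)).trace ≤
      RCLike.re ((C * U - 1)ᴴ * (C * U - 1)).trace := by
  obtain ⟨W, hW, hPW⟩ := exists_mem_unitaryGroup_cfcSqrt_mul_eq hC
  set P := CFC.sqrt (C * Cᴴ)
  have hP : P.PosSemidef := (CFC.sqrt_nonneg _).posSemidef
  have hPP : Pᴴ * P = C * Cᴴ := by
    rw [hP.1.eq]; exact CFC.sqrt_mul_sqrt_self _ (posSemidef_self_mul_conjTranspose C).nonneg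
  have hCU : (C * U)ᴴ * (C * U) = Uᴴ * (Cᴴ * C) * U := by
    rw [conjTranspose_mul]; simp only [mul_assoc]
  have htr : ((C * U)ᴴ * (C * U)).trace = (Pᴴ * P).trace := by
    have hUU : U * Uᴴ = 1 := mem_unitaryGroup_iff.mp hU
    rw [hCU, trace_mul_cycle, hUU, one_mul, hPP, trace_mul_comm]
  have hre : RCLike.re (C * U).trace ≤ RCLike.re P.trace := by
    rw [← hPW, mul_assoc]
    exact re_trace_mul_le_of_mem_unitaryGroup hP (mul_mem hW hU)
  rw [re_trace_conjTranspose_mul_sub_one, re_trace_conjTranspose_mul_sub_one, htr]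
  linarith

lemma mul_cfcSqrt_conjTranspose_mul_self {C : Matrix n n 𝕜} (hC : IsUnit C.det) :
    C * CFC.sqrt (Cᴴ * C) = CFC.sqrt (C * Cᴴ) * C := by
  obtain ⟨W, hW, hPW⟩ := exists_mem_unitaryGroup_cfcSqrt_mul_eq hC
  set P := CFC.sqrt (C * Cᴴ)
  have hPP : P * P = C * Cᴴ := CFC.sqrt_mul_sqrt_self _ (posSemidef_self_mul_conjTranspose C).nonneg
  have hPH : Pᴴ = P := (CFC.sqrt_nonneg _).posSemidef.1
  have hWW : W * Wᴴ = 1 := mem_unitaryGroup_iff.mp hW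
  have hCC : Cᴴ * C = Wᴴ * (C * Cᴴ) * W := by
    rw [← hPP, ← hPW, conjTranspose_mul, hPH]
    simp only [mul_assoc]
  calc C * CFC.sqrt (Cᴴ * C) = C * (Wᴴ * P * W) := by
        rw [hCC, cfcSqrt_conjTranspose_mul_mul_of_mem_unitaryGroup
          (posSemidef_self_mul_conjTranspose C) hW]
    _ = P * (W * Wᴴ) * (P * W) := by rw [← hPW]; simp only [mul_assoc]
    _ = P * C := by rw [hWW, mul_one, hPW]

end Matrix

/-- for invertible C, the unitary minimizing ‖CU − I‖ is
Û = √(C†C)·C⁻¹, with minimal value ‖√(CC†) − I‖. -/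
theorem unitary_optimization {d : ℕ}
    (C : Matrix (Fin d) (Fin d) ℂ) (hC : IsUnit C.det) :
    (∀ U ∈ Matrix.unitaryGroup (Fin d) ℂ,
      frob ((Matrix.posSemidef_self_mul_conjTranspose C).sqrt - 1)
        ≤ frob (C * U - 1)) ∧
    frob (C * ((Matrix.posSemidef_conjTranspose_mul_self C).sqrt * C⁻¹) - 1)
      = frob ((Matrix.posSemidef_self_mul_conjTranspose C).sqrt - 1) := by
  rw [PosSemidef.sqrt_eq_cfcSqrt, PosSemidef.sqrt_eq_cfcSqrt]
  refine ⟨fun U hU => Real.sqrt_le_sqrt (re_trace_cfcSqrt_sub_one_le hC hU), ?_⟩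
  rw [← mul_assoc, mul_cfcSqrt_conjTranspose_mul_self hC, mul_assoc, mul_nonsing_inv C hC, mul_one]
end
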